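/- For |q|<1 and ζ with |ζ|<1, ζ ≠ 1 (and denominators nonzero): ₂φ₁(q²,0;−q;q²;ζ) = 1 + ζ/((1−ζ)(1+q)) · R(ζ,−q;q²), where R(α,β;Q) = Σ_{n≥0} (αβ)^n Q^{n²}/((αQ;Q)_n (βQ;Q)_n) and ₂φ₁(a,0;b;q;z) = Σ_{n≥0} (a;q)_n/((b;q)_n (q;q)_n) z^n. -/

import Mathlib

open Complex

/-- The q-Pochhammer symbol `(a;q)_n = ∏_{j=0}^{n-1} (1 - a q^j)`. -/
noncomputable def qPoch (a q : ℂ) (n : ℕ) : ℂ := ∏ j ∈ Finset.range n, (1 - a * q ^ j)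

/-- The universal mock theta function
`R(α,β;Q) = Σ_{n≥0} (αβ)^n Q^{n²}/((αQ;Q)_n (βQ;Q)_n)`. -/
noncomputable def univR (α β Q : ℂ) : ℂ :=
  ∑' n : ℕ, (α * β) ^ n * Q ^ (n ^ 2) / (qPoch (α * Q) Q n * qPoch (β * Q) Q n)

/-!
Cancelling `(q²;q²)ₙ`, the left side is `F(-q, ζ)` for `F(b, τ) = Σ τⁿ/(b;Q)ₙ` with `Q = q²`, and
splitting off its first term gives `F(-q, ζ) = 1 + ζ/(1+q) · F(-q³, ζ)`. Iterating Fine's functional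
equation `(1-τ) F(b, τ) = 1 + bτ/(1-b) · F(bQ, τQ)` expands
`F(b, τ) = Σ (bτ)ⁿ Q^(n(n-1)) / ((b;Q)ₙ (τ;Q)ₙ₊₁)`; the remainder
`(bτ)ᴹ Q^(M(M-1)) / ((b;Q)ᴹ (τ;Q)ᴹ) · F(bQᴹ, τQᴹ)` tends to zero because
`|(x;Q)ₙ| ≥ exp(-s/((1-s)(1-t)))` uniformly for `|x| ≤ s < 1`, `|Q| ≤ t < 1`.
For `b = -q³`, `τ = ζ` this expansion is `(1-ζ)⁻¹ R(ζ, -q; q²)`.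
-/

open Finset Filter Topology

lemma qPoch_zero (a q : ℂ) : qPoch a q 0 = 1 := prod_range_zero _

lemma qPoch_succ (a q : ℂ) (n : ℕ) : qPoch a q (n + 1) = qPoch a q n * (1 - a * q ^ n) :=
  prod_range_succ _ _

lemma qPoch_succ' (a q : ℂ) (n : ℕ) : qPoch a q (n + 1) = (1 - a) * qPoch (a * q) q n := by
  rw [qPoch, prod_range_succ', pow_zero, mul_one, mul_comm]
  exact congrArg _ (prod_congr rfl fun j _ => by ring)

lemma Real.exp_neg_div_le_one_sub {x s : ℝ} (hx : 0 ≤ x) (hxs : x ≤ s) (hs : s < 1) :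
    Real.exp (-(x / (1 - s))) ≤ 1 - x := by
  have hx1 : 0 < 1 - x := by linarith
  calc Real.exp (-(x / (1 - s))) ≤ Real.exp (-(x / (1 - x))) := by gcongr
    _ = (Real.exp (x / (1 - x)))⁻¹ := Real.exp_neg _
    _ ≤ (x / (1 - x) + 1)⁻¹ := by
        gcongr
        exact Real.add_one_le_exp _
    _ = 1 - x := by field_simp; ring

lemma exp_le_norm_qPoch {x Q : ℂ} {s t : ℝ} (hx : ‖x‖ ≤ s) (hs : s < 1) (hQ : ‖Q‖ ≤ t)
    (ht : t < 1) (n : ℕ) : Real.exp (-(s / ((1 - s) * (1 - t)))) ≤ ‖qPoch x Q n‖ := by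
  have hs0 : 0 ≤ s := (norm_nonneg x).trans hx
  have ht0 : 0 ≤ t := (norm_nonneg Q).trans hQ
  have hst : ∀ j : ℕ, s * t ^ j ≤ s := fun j => mul_le_of_le_one_right hs0 (pow_le_one₀ ht0 ht.le)
  have hfactor : ∀ j ∈ range n, Real.exp (-(s * t ^ j / (1 - s))) ≤ ‖1 - x * Q ^ j‖ := by
    intro j _
    calc Real.exp (-(s * t ^ j / (1 - s))) ≤ 1 - s * t ^ j :=
          Real.exp_neg_div_le_one_sub (by positivity) (hst j) hs
      _ ≤ 1 - ‖x * Q ^ j‖ := by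
          rw [norm_mul, norm_pow]
          gcongr
      _ ≤ ‖1 - x * Q ^ j‖ := by simpa using norm_sub_norm_le (1 : ℂ) (x * Q ^ j)
  have hgeom : ∑ j ∈ range n, t ^ j ≤ 1 / (1 - t) := by
    have := geom_sum_Ico_le_of_lt_one (m := 0) (n := n) ht0 ht
    rwa [pow_zero, ← range_eq_Ico] at this
  calc Real.exp (-(s / ((1 - s) * (1 - t))))
      ≤ Real.exp (-(s / (1 - s) * ∑ j ∈ range n, t ^ j)) := by
        have : 0 ≤ s / (1 - s) := div_nonneg hs0 (by linarith)
        gcongr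
        calc s / (1 - s) * ∑ j ∈ range n, t ^ j ≤ s / (1 - s) * (1 / (1 - t)) := by gcongr
          _ = _ := by rw [mul_one_div, div_div]
    _ = ∏ j ∈ range n, Real.exp (-(s * t ^ j / (1 - s))) := by
        rw [← Real.exp_sum, mul_sum, ← sum_neg_distrib]
        exact congrArg _ (sum_congr rfl fun j _ => by ring)
    _ ≤ ‖qPoch x Q n‖ := by
        rw [qPoch, norm_prod]
        exact prod_le_prod (fun j _ => (Real.exp_pos _).le) hfactor

lemma qPoch_ne_zero {x Q : ℂ} (hx : ‖x‖ < 1) (hQ : ‖Q‖ < 1) (n : ℕ) : qPoch x Q n ≠ 0 :=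
  norm_pos_iff.mp ((Real.exp_pos _).trans_le (exp_le_norm_qPoch le_rfl hx le_rfl hQ n))

lemma norm_inv_qPoch_le {x Q : ℂ} {s t : ℝ} (hx : ‖x‖ ≤ s) (hs : s < 1) (hQ : ‖Q‖ ≤ t)
    (ht : t < 1) (n : ℕ) : ‖(qPoch x Q n)⁻¹‖ ≤ Real.exp (s / ((1 - s) * (1 - t))) := by
  rw [norm_inv, ← inv_inv (Real.exp _), ← Real.exp_neg]
  exact inv_anti₀ (Real.exp_pos _) (exp_le_norm_qPoch hx hs hQ ht n)

/-- Fine's `F(0, b/Q; τ)` in base `Q`. -/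
noncomputable def fineSeries (b τ Q : ℂ) : ℂ := ∑' n : ℕ, τ ^ n / qPoch b Q n

section fineSeries

variable {b τ Q : ℂ}

lemma norm_pow_div_qPoch_le {s t r : ℝ} (hb : ‖b‖ ≤ s) (hs : s < 1) (hQ : ‖Q‖ ≤ t)
    (ht : t < 1) (hτ : ‖τ‖ ≤ r) (n : ℕ) :
    ‖τ ^ n / qPoch b Q n‖ ≤ Real.exp (s / ((1 - s) * (1 - t))) * r ^ n := by
  rw [div_eq_mul_inv, norm_mul, norm_pow, mul_comm]
  gcongr
  exact norm_inv_qPoch_le hb hs hQ ht n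

lemma summable_fineSeries (hb : ‖b‖ < 1) (hτ : ‖τ‖ < 1) (hQ : ‖Q‖ < 1) :
    Summable fun n : ℕ => τ ^ n / qPoch b Q n :=
  .of_norm_bounded ((summable_geometric_of_lt_one (norm_nonneg τ) hτ).mul_left _)
    (norm_pow_div_qPoch_le le_rfl hb le_rfl hQ le_rfl)

lemma norm_fineSeries_le {s t : ℝ} (hb : ‖b‖ ≤ s) (hτ : ‖τ‖ ≤ s) (hs : s < 1) (hQ : ‖Q‖ ≤ t)
    (ht : t < 1) : ‖fineSeries b τ Q‖ ≤ Real.exp (s / ((1 - s) * (1 - t))) * (1 - s)⁻¹ :=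
  tsum_of_norm_bounded
    ((hasSum_geometric_of_lt_one ((norm_nonneg τ).trans hτ) hs).mul_left _)
    (norm_pow_div_qPoch_le hb hs hQ ht hτ)

lemma fineSeries_eq_one_add (hb : ‖b‖ < 1) (hτ : ‖τ‖ < 1) (hQ : ‖Q‖ < 1) :
    fineSeries b τ Q = 1 + τ / (1 - b) * fineSeries (b * Q) τ Q := by
  rw [fineSeries, (summable_fineSeries hb hτ hQ).tsum_eq_zero_add, fineSeries, ← tsum_mul_left]
  simp only [qPoch_zero, qPoch_succ', pow_zero, pow_succ, div_eq_mul_inv, mul_inv, inv_one,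
    mul_one]
  exact congrArg _ (tsum_congr fun n => by ring)

lemma one_sub_mul_fineSeries (hb : ‖b‖ < 1) (hτ : ‖τ‖ < 1) (hQ : ‖Q‖ < 1) :
    (1 - τ) * fineSeries b τ Q = 1 + b * τ / (1 - b) * fineSeries (b * Q) (τ * Q) Q := by
  have hsum := summable_fineSeries hb hτ hQ
  have hdiff : ∀ n : ℕ, τ ^ (n + 1) / qPoch b Q (n + 1) - τ * (τ ^ n / qPoch b Q n)
      = b * τ / (1 - b) * ((τ * Q) ^ n / qPoch (b * Q) Q n) := by
    intro n
    have hfactor : 1 - b * Q ^ n ≠ 0 := by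
      have := qPoch_ne_zero hb hQ (n + 1)
      rw [qPoch_succ] at this
      exact right_ne_zero_of_mul this
    have hinv : (qPoch b Q n)⁻¹ = (1 - b * Q ^ n) * (qPoch b Q (n + 1))⁻¹ := by
      rw [qPoch_succ, mul_inv, mul_left_comm, mul_inv_cancel₀ hfactor, mul_one]
    rw [div_eq_mul_inv _ (qPoch b Q n), hinv, qPoch_succ', div_eq_mul_inv, mul_inv]
    ring
  calc (1 - τ) * fineSeries b τ Q = fineSeries b τ Q - τ * fineSeries b τ Q := by ring
    _ = (1 + ∑' n : ℕ, τ ^ (n + 1) / qPoch b Q (n + 1)) - ∑' n : ℕ, τ * (τ ^ n / qPoch b Q n) := by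
        congr 1
        · rw [fineSeries, hsum.tsum_eq_zero_add, pow_zero, qPoch_zero, div_one]
        · rw [fineSeries, tsum_mul_left]
    _ = 1 + ∑' n : ℕ, (τ ^ (n + 1) / qPoch b Q (n + 1) - τ * (τ ^ n / qPoch b Q n)) := by
        rw [Summable.tsum_sub ((summable_nat_add_iff 1).mpr hsum) (hsum.mul_left τ)]
        ring
    _ = 1 + b * τ / (1 - b) * fineSeries (b * Q) (τ * Q) Q := by
        rw [fineSeries, ← tsum_mul_left, tsum_congr hdiff]

lemma norm_mul_pow_le {x : ℂ} (hQ : ‖Q‖ ≤ 1) (M : ℕ) : ‖x * Q ^ M‖ ≤ ‖x‖ := by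
  rw [norm_mul, norm_pow]
  exact mul_le_of_le_one_right (norm_nonneg x) (pow_le_one₀ (norm_nonneg Q) hQ)

lemma norm_mul_pow_div_qPoch_mul_qPoch_le {s t : ℝ} (hb : ‖b‖ ≤ s) (hτ : ‖τ‖ ≤ s) (hs : s < 1)
    (hQ : ‖Q‖ ≤ t) (ht : t < 1) (n k l : ℕ) :
    ‖(b * τ) ^ n * Q ^ k / (qPoch b Q n * qPoch τ Q l)‖
      ≤ Real.exp (s / ((1 - s) * (1 - t))) ^ 2 * (s ^ 2) ^ n := by
  have hbτ : ‖b * τ‖ ≤ s ^ 2 := by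
    rw [norm_mul, sq]
    exact mul_le_mul hb hτ (norm_nonneg τ) ((norm_nonneg b).trans hb)
  have hQk : ‖Q ^ k‖ ≤ 1 := by
    rw [norm_pow]
    exact pow_le_one₀ (norm_nonneg Q) (hQ.trans ht.le)
  rw [div_eq_mul_inv, mul_inv, norm_mul, norm_mul, norm_mul, norm_pow]
  calc ‖b * τ‖ ^ n * ‖Q ^ k‖ * (‖(qPoch b Q n)⁻¹‖ * ‖(qPoch τ Q l)⁻¹‖)
      ≤ (s ^ 2) ^ n * 1 * (Real.exp (s / ((1 - s) * (1 - t))) *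
          Real.exp (s / ((1 - s) * (1 - t)))) := by
        gcongr
        exacts [norm_inv_qPoch_le hb hs hQ ht n, norm_inv_qPoch_le hτ hs hQ ht l]
    _ = _ := by ring

lemma fineSeries_eq_sum_range_add (hb : ‖b‖ < 1) (hτ : ‖τ‖ < 1) (hQ : ‖Q‖ < 1) (M : ℕ) :
    fineSeries b τ Q
      = ∑ n ∈ range M, (b * τ) ^ n * Q ^ (n * (n - 1)) / (qPoch b Q n * qPoch τ Q (n + 1))
        + (b * τ) ^ M * Q ^ (M * (M - 1)) / (qPoch b Q M * qPoch τ Q M)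
          * fineSeries (b * Q ^ M) (τ * Q ^ M) Q := by
  induction M with
  | zero => simp [qPoch_zero]
  | succ M ih =>
    have hbM := (norm_mul_pow_le hQ.le M).trans_lt hb
    have hτM := (norm_mul_pow_le hQ.le M).trans_lt hτ
    have hτM1 : 1 - τ * Q ^ M ≠ 0 := sub_ne_zero.mpr fun h => by simp [← h] at hτM
    have hstep := (eq_inv_mul_iff_mul_eq₀ hτM1).mpr (one_sub_mul_fineSeries hbM hτM hQ)
    have hexp : (M + 1) * (M + 1 - 1) = M * (M - 1) + 2 * M := by
      rcases M with _ | M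
      · rfl
      · rw [Nat.add_sub_cancel, Nat.add_sub_cancel]
        ring
    rw [ih, hstep, sum_range_succ, hexp, qPoch_succ b, qPoch_succ τ,
      show b * Q ^ M * Q = b * Q ^ (M + 1) by ring, show τ * Q ^ M * Q = τ * Q ^ (M + 1) by ring]
    simp only [div_eq_mul_inv, mul_inv]
    ring

theorem fineSeries_eq_tsum (hb : ‖b‖ < 1) (hτ : ‖τ‖ < 1) (hQ : ‖Q‖ < 1) :
    fineSeries b τ Q
      = ∑' n : ℕ, (b * τ) ^ n * Q ^ (n * (n - 1)) / (qPoch b Q n * qPoch τ Q (n + 1)) := by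
  set s := max ‖b‖ ‖τ‖
  have hs : s < 1 := max_lt hb hτ
  have hbs : ‖b‖ ≤ s := le_max_left _ _
  have hτs : ‖τ‖ ≤ s := le_max_right _ _
  have hs2 : s ^ 2 < 1 := pow_lt_one₀ ((norm_nonneg b).trans hbs) hs two_ne_zero
  set K := Real.exp (s / ((1 - s) * (1 - ‖Q‖)))
  have hsummable : Summable fun n : ℕ =>
      (b * τ) ^ n * Q ^ (n * (n - 1)) / (qPoch b Q n * qPoch τ Q (n + 1)) :=
    .of_norm_bounded ((summable_geometric_of_lt_one (by positivity) hs2).mul_left (K ^ 2))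
      fun n => norm_mul_pow_div_qPoch_mul_qPoch_le hbs hτs hs le_rfl hQ n _ _
  have hremainder : Tendsto (fun M : ℕ => (b * τ) ^ M * Q ^ (M * (M - 1))
      / (qPoch b Q M * qPoch τ Q M) * fineSeries (b * Q ^ M) (τ * Q ^ M) Q) atTop (𝓝 0) := by
    refine squeeze_zero_norm (fun M => ?_)
      ((((tendsto_pow_atTop_nhds_zero_of_lt_one (by positivity) hs2).const_mul (K ^ 2)).mul_const
        (K * (1 - s)⁻¹)).trans_eq (by rw [mul_zero, zero_mul]))
    rw [norm_mul]
    exact mul_le_mul (norm_mul_pow_div_qPoch_mul_qPoch_le hbs hτs hs le_rfl hQ M _ _)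
      (norm_fineSeries_le ((norm_mul_pow_le hQ.le M).trans hbs)
        ((norm_mul_pow_le hQ.le M).trans hτs) hs le_rfl hQ) (norm_nonneg _) (by positivity)
  refine tendsto_nhds_unique ?_ hsummable.hasSum.tendsto_sum_nat
  simp_rw [fun M => eq_sub_of_add_eq (fineSeries_eq_sum_range_add hb hτ hQ M).symm]
  simpa using tendsto_const_nhds.sub hremainder

end fineSeries

theorem twoPhiOne_eq_R_neg_q_general (q ζ : ℂ) (hq1 : ‖q‖ < 1) (hζ : ‖ζ‖ < 1) :
    ∑' n : ℕ, qPoch (q ^ 2) (q ^ 2) n /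
        (qPoch (-q) (q ^ 2) n * qPoch (q ^ 2) (q ^ 2) n) * ζ ^ n
      = 1 + ζ / ((1 - ζ) * (1 + q)) * univR ζ (-q) (q ^ 2) := by
  have hq2 : ‖q ^ 2‖ < 1 := by rw [norm_pow]; exact pow_lt_one₀ (norm_nonneg q) hq1 two_ne_zero
  have hq : ‖-q‖ < 1 := by rwa [norm_neg]
  have hq3 : ‖-q * q ^ 2‖ < 1 := by
    rw [norm_mul]
    exact mul_lt_one_of_nonneg_of_lt_one_left (norm_nonneg _) hq hq2.le
  have hlhs : ∑' n : ℕ, qPoch (q ^ 2) (q ^ 2) n /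
      (qPoch (-q) (q ^ 2) n * qPoch (q ^ 2) (q ^ 2) n) * ζ ^ n = fineSeries (-q) ζ (q ^ 2) :=
    tsum_congr fun n => by
      have := qPoch_ne_zero hq2 hq2 n
      field_simp
  have hR : fineSeries (-q * q ^ 2) ζ (q ^ 2) = (1 - ζ)⁻¹ * univR ζ (-q) (q ^ 2) := by
    rw [fineSeries_eq_tsum hq3 hζ hq2, univR, ← tsum_mul_left]
    refine tsum_congr fun n => ?_
    have hexp : n ^ 2 = n * (n - 1) + n := by
      rcases n with _ | n
      · rfl
      · rw [Nat.add_sub_cancel]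
        ring
    rw [qPoch_succ', hexp, pow_add]
    simp only [div_eq_mul_inv, mul_inv]
    ring
  rw [hlhs, fineSeries_eq_one_add hq hζ hq2, hR, div_mul_eq_div_div_swap]
  ring

/-- `₂φ₁(q²,0;−q;q²;ζ) = 1 + ζ/((1−ζ)(1+q)) · R(ζ,−q;q²)`. -/
theorem twoPhiOne_eq_R_neg_q (q ζ : ℂ) (hq0 : 0 < ‖q‖) (hq1 : ‖q‖ < 1)
    (hζ : ‖ζ‖ < 1) (hζ1 : ζ ≠ 1) (hζq : ∀ m : ℕ, ζ * q ^ (2 * m) ≠ 1) :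
    ∑' n : ℕ, qPoch (q ^ 2) (q ^ 2) n /
        (qPoch (-q) (q ^ 2) n * qPoch (q ^ 2) (q ^ 2) n) * ζ ^ n
      = 1 + ζ / ((1 - ζ) * (1 + q)) * univR ζ (-q) (q ^ 2) :=
  twoPhiOne_eq_R_neg_q_general q ζ hq1 hζ
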